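/- Let m = p₁⋯p_r be a product of r pairwise distinct primes. There exists a symmetric polynomial P ∈ (ZMod m)[x₁,…,x_n] of total degree at most 2⌈n^{1/r}⌉ such that P(0,…,0) = 0 and P(x) ≠ 0 in ZMod m for every nonzero x ∈ {0,1}^n. -/

import Mathlib

open Finset

/-- Additive directional derivative `D_h f(x) = f(x+h) - f(x)`. -/
noncomputable def D {V M : Type*} [Add V] [AddCommGroup M] (h : V) (f : V → M) : V → M :=
  fun x => f (x + h) - f x

/-- `f` is a nonclassical polynomial of degree at most `d`:
all `(d+1)`-fold iterated derivatives vanish identically. -/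
def IsNCPoly {V M : Type*} [Add V] [AddCommGroup M] (d : ℕ) (f : V → M) : Prop :=
  ∀ hs : List V, hs.length = d + 1 → hs.foldr D f = 0

/-- `e(t) = exp(2πit)` on the torus `ℝ/ℤ`. -/
noncomputable def e : AddCircle (1 : ℝ) → ℂ :=
  Function.Periodic.lift (f := fun t : ℝ => Complex.exp (2 * (Real.pi : ℂ) * Complex.I * (t : ℂ)))
    (by
      intro t
      dsimp only
      rw [Complex.ofReal_add, Complex.ofReal_one, mul_add, mul_one, Complex.exp_add,
        Complex.exp_two_pi_mul_I, mul_one])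

/-!
Let `d = ⌈n^{1/r}⌉` and, for each prime `p = pᵢ`, let `k = ⌊log_p d⌋`, so that
`p^k ≤ d < p^{k+1}`. By Lucas' theorem the elementary symmetric polynomial `S_{p^j}` takes, at a
0/1-point of Hamming weight `w`, the value of the `j`-th base-`p` digit of `w` in `𝔽_p`. Hence
`z₁ = 1 - ∏_{j<k} (1 - S_{p^j}^{p-1})` is `0` or `1` according as the digits of `w` below `k`
all vanish or not, and `z₂ = S_{p^k}` is the `k`-th digit. Choosing `c ∈ 𝔽_p` with `t² + t + c`
rootless (this replaces the paper's case distinction between `p = 2` and odd `p`), the form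
`z₁² + z₁z₂ + c z₂²` is anisotropic, so it vanishes exactly when `p^{k+1} ∣ w`; its degree is
at most `2 p^k ≤ 2d`. Gluing these polynomials over `ZMod (∏ pᵢ)` by the Chinese remainder
theorem gives `P`: a weight `0 < w ≤ n ≤ d^r < ∏ pᵢ^{kᵢ+1}` cannot be divisible by every
`pᵢ^{kᵢ+1}`.
-/

open MvPolynomial
open scoped Function

section Form

variable {A B : Type*} [CommRing A] [CommRing B]

def lowDigitIndicator (p k : ℕ) (s : ℕ → A) : A :=
  1 - ∏ j ∈ range k, (1 - s (p ^ j) ^ (p - 1))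

/-- The paper's `z₁² + z₁z₂ + c z₂²` as a function of the values `s l` of `S_l`: at
`s = esymm σ R` it is the polynomial, at `s l = w.choose l` its value at a point of weight `w`. -/
def orForm (p k : ℕ) (c : A) (s : ℕ → A) : A :=
  lowDigitIndicator p k s ^ 2 + lowDigitIndicator p k s * s (p ^ k) + c * s (p ^ k) ^ 2

theorem map_orForm (f : A →+* B) (p k : ℕ) (c : A) (s : ℕ → A) :
    f (orForm p k c s) = orForm p k (f c) (f ∘ s) := by
  simp [orForm, lowDigitIndicator, map_prod]

theorem orForm_eq_zero {p : ℕ} (hp : 1 < p) (k : ℕ) (c : A) {s : ℕ → A}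
    (hs : ∀ j, s (p ^ j) = 0) : orForm p k c s = 0 := by
  simp [orForm, lowDigitIndicator, hs, zero_pow (Nat.sub_ne_zero_of_lt hp)]

end Form

theorem exists_forall_sq_add_self_add_ne_zero (K : Type*) [CommRing K] [Finite K]
    [Nontrivial K] : ∃ c : K, ∀ t, t ^ 2 + t + c ≠ 0 := by
  have not_inj : ¬ Function.Injective (fun t : K => t ^ 2 + t) := fun h =>
    neg_ne_zero.mpr one_ne_zero (@h (-1) 0 (by ring))
  obtain ⟨b, hb⟩ : ∃ b, ∀ t : K, t ^ 2 + t ≠ b := by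
    simpa [Function.Surjective] using mt Finite.injective_iff_surjective.mpr not_inj
  exact ⟨-b, fun t ht => hb t (by linear_combination ht)⟩

theorem eq_zero_of_sq_add_mul_add_mul_sq_eq_zero {K : Type*} [Field K] {c a b : K}
    (hc : ∀ t, t ^ 2 + t + c ≠ 0) (h : a ^ 2 + a * b + c * b ^ 2 = 0) : a = 0 ∧ b = 0 := by
  by_cases hb : b = 0
  · subst hb
    exact ⟨pow_eq_zero_iff two_ne_zero |>.mp (by simpa using h), rfl⟩
  · refine absurd ?_ (hc (a / b))
    field_simp
    linear_combination h

theorem cast_choose_prime_pow (p : ℕ) [Fact p.Prime] (w j : ℕ) :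
    ((w.choose (p ^ j) : ℕ) : ZMod p) = ((w / p ^ j % p : ℕ) : ZMod p) := by
  induction j generalizing w with
  | zero => simp [ZMod.natCast_mod]
  | succ j ih =>
    have hp := (Fact.out : p.Prime).pos
    have lucas := Choose.choose_modEq_choose_mod_mul_choose_div_nat (p := p) (n := w)
      (k := p ^ (j + 1))
    rw [pow_succ, Nat.mul_mod_left, Nat.mul_div_cancel _ hp, Nat.choose_zero_right,
      one_mul] at lucas
    rw [pow_succ, (ZMod.natCast_eq_natCast_iff _ _ _).mpr lucas, ih, Nat.div_div_eq_div_mul,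
      mul_comm]

theorem exists_digit_ne_zero_of_not_dvd {p : ℕ} [Fact p.Prime] {k w : ℕ}
    (hw : ¬ p ^ (k + 1) ∣ w) : ∃ j ≤ k, w / p ^ j % p ≠ 0 := by
  have hw0 : w ≠ 0 := by rintro rfl; exact hw (dvd_zero _)
  refine ⟨padicValNat p w, ?_, fun h => pow_succ_padicValNat_not_dvd (p := p) hw0 ?_⟩
  · by_contra! hlt
    exact hw ((pow_dvd_pow p hlt).trans pow_padicValNat_dvd)
  · rw [pow_succ]
    exact Nat.mul_dvd_of_dvd_div pow_padicValNat_dvd (Nat.dvd_of_mod_eq_zero h)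

theorem orForm_choose_ne_zero {p : ℕ} [Fact p.Prime] {c : ZMod p} (hc : ∀ t, t ^ 2 + t + c ≠ 0)
    {k w : ℕ} (hw : ¬ p ^ (k + 1) ∣ w) :
    orForm p k c (fun l => (w.choose l : ZMod p)) ≠ 0 := by
  obtain ⟨j, hjk, hj⟩ := exists_digit_ne_zero_of_not_dvd hw
  have digit_ne_zero : ((w / p ^ j % p : ℕ) : ZMod p) ≠ 0 := by
    rwa [Ne, ZMod.natCast_eq_zero_iff, Nat.dvd_iff_mod_eq_zero, Nat.mod_mod]
  intro h
  obtain ⟨h₁, h₂⟩ := eq_zero_of_sq_add_mul_add_mul_sq_eq_zero hc h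
  rcases hjk.lt_or_eq with hjk | rfl
  · have : ∏ i ∈ range k, (1 - ((w.choose (p ^ i) : ℕ) : ZMod p) ^ (p - 1)) = 0 :=
      prod_eq_zero (mem_range.mpr hjk) <| by
        rw [cast_choose_prime_pow, ZMod.pow_card_sub_one_eq_one digit_ne_zero, sub_self]
    simp [lowDigitIndicator, this] at h₁
  · exact digit_ne_zero (by rwa [← cast_choose_prime_pow])

section Polynomial

variable (σ : Type*) {R : Type*} [Fintype σ] [CommRing R]

noncomputable def orPoly (p k : ℕ) (c : R) : MvPolynomial σ R :=
  orForm p k (C c) (esymm σ R)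

theorem orPoly_isSymmetric (p k : ℕ) (c : R) : (orPoly σ p k c).IsSymmetric := fun g => by
  rw [orPoly, ← AlgHom.coe_toRingHom, map_orForm]
  simp only [AlgHom.coe_toRingHom, rename_C, Function.comp_def, rename_esymm]

theorem totalDegree_esymm_le (l : ℕ) : (esymm σ R l).totalDegree ≤ l := by
  refine totalDegree_finsetSum_le fun t ht => (totalDegree_finsetProd _ _).trans ?_
  calc ∑ i ∈ t, (X i : MvPolynomial σ R).totalDegree ≤ ∑ _i ∈ t, 1 :=
        sum_le_sum fun i _ => (isHomogeneous_X R i).totalDegree_le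
    _ = l := by simpa using (mem_powersetCard.mp ht).2

theorem totalDegree_lowDigitIndicator_esymm_le {p : ℕ} (hp : 0 < p) (k : ℕ) :
    (lowDigitIndicator p k (esymm σ R)).totalDegree ≤ p ^ k := by
  refine (totalDegree_sub _ _).trans (max_le (by simp) ?_)
  calc (∏ j ∈ range k, (1 - esymm σ R (p ^ j) ^ (p - 1))).totalDegree
      ≤ ∑ j ∈ range k, (p - 1) * p ^ j := by
        refine (totalDegree_finsetProd _ _).trans (sum_le_sum fun j _ => ?_)
        refine (totalDegree_sub _ _).trans (max_le (by simp) ?_)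
        exact (totalDegree_pow _ _).trans (Nat.mul_le_mul_left _ (totalDegree_esymm_le σ _))
    _ ≤ p ^ k := by
        have := geom_sum_mul_add (p - 1) k
        rw [Nat.sub_one_add_one hp.ne'] at this
        rw [← mul_sum, mul_comm]
        omega

theorem totalDegree_orPoly_le {p : ℕ} (hp : 0 < p) (k : ℕ) (c : R) :
    (orPoly σ p k c).totalDegree ≤ 2 * p ^ k := by
  set a := lowDigitIndicator p k (esymm σ R)
  set b := esymm σ R (p ^ k)
  change (a ^ 2 + a * b + C c * b ^ 2).totalDegree ≤ 2 * p ^ k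
  have ha : a.totalDegree ≤ p ^ k := totalDegree_lowDigitIndicator_esymm_le σ hp k
  have hb : b.totalDegree ≤ p ^ k := totalDegree_esymm_le σ (p ^ k)
  have hab := totalDegree_mul a b
  have ha2 := totalDegree_pow a 2
  have hcb2 := (totalDegree_mul (C c) (b ^ 2)).trans_eq (by rw [totalDegree_C, zero_add])
  have hb2 := totalDegree_pow b 2
  refine (totalDegree_add _ _).trans
    (max_le ((totalDegree_add _ _).trans (max_le ?_ ?_)) ?_) <;> omega

theorem eval_esymm_boolean (x : σ → Bool) (l : ℕ) :
    eval (fun j => if x j then (1 : R) else 0) (esymm σ R l)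
      = ((#{j | x j}).choose l : ℕ) := by
  simp only [esymm, map_sum, map_prod, eval_X, prod_boole]
  rw [← card_powersetCard, ← natCast_card_filter]
  congr 2
  ext t
  simp [subset_iff, and_comm]

theorem eval_orPoly_boolean (x : σ → Bool) (p k : ℕ) (c : R) :
    eval (fun j => if x j then (1 : R) else 0) (orPoly σ p k c)
      = orForm p k c (fun l => ((#{j | x j}).choose l : R)) := by
  rw [orPoly, map_orForm]
  congr
  · exact eval_C c
  · funext l
    exact eval_esymm_boolean σ x l

end Polynomial

theorem prodEquivPi_sum_symm_single_mul {ι : Type*} [Fintype ι] [DecidableEq ι] {a : ι → ℕ}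
    (ha : Pairwise (Nat.Coprime on a)) (y : ι → ZMod (∏ i, a i)) (j : ι) :
    ZMod.prodEquivPi a ha (∑ i, (ZMod.prodEquivPi a ha).symm (Pi.single i 1) * y i) j
      = ZMod.prodEquivPi a ha (y j) j := by
  rw [map_sum, Finset.sum_apply, Fintype.sum_eq_single j]
  · rw [map_mul, Pi.mul_apply, RingEquiv.apply_symm_apply, Pi.single_eq_same, one_mul]
  · intro i hij
    rw [map_mul, Pi.mul_apply, RingEquiv.apply_symm_apply, Pi.single_eq_of_ne' hij, zero_mul]

theorem prod_dvd_of_pairwise_coprime {ι : Type*} [Fintype ι] {a : ι → ℕ}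
    (ha : Pairwise (Nat.Coprime on a)) {w : ℕ} (hw : ∀ i, a i ∣ w) : ∏ i, a i ∣ w := by
  have := Fintype.prod_dvd_of_coprime (s := fun i => (a i : ℤ)) (z := (w : ℤ))
    (fun i j hij => Nat.isCoprime_iff_coprime.mpr (ha hij))
    (fun i => Int.natCast_dvd_natCast.mpr (hw i))
  exact_mod_cast this

theorem pow_card_le_prod_pow_succ_log {ι : Type*} [Fintype ι] {a : ι → ℕ} (ha : ∀ i, 1 < a i)
    (d : ℕ) : (d + 1) ^ Fintype.card ι ≤ ∏ i, a i ^ (Nat.log (a i) d + 1) := by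
  rw [← card_univ, ← prod_const]
  exact prod_le_prod' fun i _ => Nat.lt_pow_succ_log_self (ha i) d

theorem le_ceil_rpow_one_div_pow (n : ℕ) {r : ℕ} (hr : r ≠ 0) :
    n ≤ ⌈(n : ℝ) ^ ((1 : ℝ) / r)⌉₊ ^ r := by
  have : (n : ℝ) ≤ (⌈(n : ℝ) ^ ((1 : ℝ) / r)⌉₊ : ℝ) ^ r :=
    calc (n : ℝ) = ((n : ℝ) ^ ((r : ℝ)⁻¹)) ^ r :=
          (Real.rpow_inv_natCast_pow n.cast_nonneg hr).symm
      _ ≤ _ := by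
          rw [one_div]
          gcongr
          exact Nat.le_ceil _
  exact_mod_cast this

theorem exists_not_pow_succ_log_dvd {ι : Type*} [Fintype ι] {a : ι → ℕ}
    (ha : Pairwise (Nat.Coprime on a)) (ha₁ : ∀ i, 1 < a i) {d w : ℕ} (hw₀ : w ≠ 0)
    (hw : w < (d + 1) ^ Fintype.card ι) : ∃ i, ¬ a i ^ (Nat.log (a i) d + 1) ∣ w := by
  by_contra! hdvd
  have := Nat.le_of_dvd (Nat.pos_of_ne_zero hw₀)
    (prod_dvd_of_pairwise_coprime (fun i j hij => (ha hij).pow _ _) hdvd)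
  have := pow_card_le_prod_pow_succ_log ha₁ d
  omega

section Gluing

variable (σ : Type*) [Fintype σ] {ι : Type*} [Fintype ι] [DecidableEq ι] {p : ι → ℕ}
  (hp : Pairwise (Nat.Coprime on p)) (k : ι → ℕ) (c : ∀ i, ZMod (p i))

noncomputable def crtOrPoly : MvPolynomial σ (ZMod (∏ i, p i)) :=
  ∑ i, C ((ZMod.prodEquivPi p hp).symm (Pi.single i 1)) *
    orPoly σ (p i) (k i) ((ZMod.prodEquivPi p hp).symm c)

theorem crtOrPoly_isSymmetric : (crtOrPoly σ hp k c).IsSymmetric := fun g => by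
  simp only [crtOrPoly, map_sum, map_mul, rename_C, orPoly_isSymmetric σ _ _ _ g]

theorem totalDegree_crtOrPoly_le (hp₀ : ∀ i, 0 < p i) {d : ℕ} (hd : ∀ i, p i ^ k i ≤ d) :
    (crtOrPoly σ hp k c).totalDegree ≤ 2 * d := by
  refine totalDegree_finsetSum_le fun i _ => (totalDegree_mul _ _).trans ?_
  rw [totalDegree_C, zero_add]
  exact (totalDegree_orPoly_le σ (hp₀ i) _ _).trans (by have := hd i; omega)

theorem prodEquivPi_eval_crtOrPoly_boolean (x : σ → Bool) (j : ι) :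
    ZMod.prodEquivPi p hp (eval (fun i => if x i then 1 else 0) (crtOrPoly σ hp k c)) j
      = orForm (p j) (k j) (c j) (fun l => ((#{i | x i}).choose l : ZMod (p j))) := by
  simp_rw [crtOrPoly, map_sum (eval _), map_mul, eval_C]
  rw [prodEquivPi_sum_symm_single_mul, eval_orPoly_boolean, ZMod.prodEquivPi_apply, map_orForm,
    ← ZMod.prodEquivPi_apply p hp, RingEquiv.apply_symm_apply]
  simp only [Function.comp_def, map_natCast]

theorem eval_zero_crtOrPoly (hp₁ : ∀ i, 1 < p i) : eval 0 (crtOrPoly σ hp k c) = 0 := by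
  have h0 : (0 : σ → ZMod (∏ i, p i)) = fun i => if (fun _ => false) i then 1 else 0 := by
    funext; simp
  refine (ZMod.prodEquivPi p hp).injective (funext fun j => ?_)
  rw [h0, prodEquivPi_eval_crtOrPoly_boolean, map_zero]
  refine orForm_eq_zero (hp₁ j) _ _ fun l => ?_
  simp [Nat.choose_eq_zero_of_lt (Nat.pow_pos (zero_lt_one.trans (hp₁ j)) (n := l))]

theorem eval_crtOrPoly_boolean_ne_zero [∀ i, Fact (p i).Prime]
    (hc : ∀ i t, t ^ 2 + t + c i ≠ 0) (x : σ → Bool) (hx : ∃ j, ¬ p j ^ (k j + 1) ∣ #{i | x i}) :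
    eval (fun i => if x i then 1 else 0) (crtOrPoly σ hp k c) ≠ 0 := by
  obtain ⟨j, hj⟩ := hx
  intro h
  apply orForm_choose_ne_zero (hc j) hj
  rw [← prodEquivPi_eval_crtOrPoly_boolean σ hp, h, map_zero]
  rfl

end Gluing

/-- There is a symmetric polynomial of degree at most `2⌈n^{1/r}⌉` over
`ZMod m`, `m` a product of `r` distinct primes, weakly representing OR. -/
theorem stmt19 (r n : ℕ) (hr : 1 ≤ r) (p : Fin r → ℕ)
    (hp : ∀ i, (p i).Prime) (hinj : Function.Injective p)
    (m : ℕ) (hm : m = ∏ i, p i) :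
    ∃ P : MvPolynomial (Fin n) (ZMod m),
      (∀ σ : Equiv.Perm (Fin n), MvPolynomial.rename σ P = P) ∧
      P.totalDegree ≤ 2 * ⌈(n : ℝ) ^ ((1 : ℝ) / r)⌉₊ ∧
      MvPolynomial.eval (0 : Fin n → ZMod m) P = 0 ∧
      ∀ x : Fin n → Bool, x ≠ (fun _ => false) →
        MvPolynomial.eval (fun j => if x j then (1 : ZMod m) else 0) P ≠ 0 := by
  subst hm
  rcases Nat.eq_zero_or_pos n with rfl | hn
  · exact ⟨0, fun _ => by simp, by simp, by simp, fun x hx => absurd (Subsingleton.elim _ _) hx⟩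
  have : ∀ i, Fact (p i).Prime := fun i => ⟨hp i⟩
  have hcop : Pairwise (Nat.Coprime on p) := fun i j hij =>
    (Nat.coprime_primes (hp i) (hp j)).mpr (hinj.ne hij)
  set d := ⌈(n : ℝ) ^ ((1 : ℝ) / r)⌉₊
  have hnd : n ≤ d ^ r := le_ceil_rpow_one_div_pow n (by omega)
  have hd : d ≠ 0 := by
    rintro hd
    rw [hd, zero_pow (by omega)] at hnd
    omega
  choose c hc using fun i => exists_forall_sq_add_self_add_ne_zero (ZMod (p i))
  refine ⟨crtOrPoly (Fin n) hcop (fun i => Nat.log (p i) d) c, crtOrPoly_isSymmetric _ _ _ _,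
    totalDegree_crtOrPoly_le _ _ _ _ (fun i => (hp i).pos) fun i => Nat.pow_log_le_self _ hd,
    eval_zero_crtOrPoly _ _ _ _ fun i => (hp i).one_lt, fun x hx => ?_⟩
  refine eval_crtOrPoly_boolean_ne_zero _ _ _ _ hc x
    (exists_not_pow_succ_log_dvd hcop (fun i => (hp i).one_lt) ?_ ?_)
  · obtain ⟨i, hi⟩ := Function.ne_iff.mp hx
    exact card_ne_zero_of_mem (mem_filter.mpr ⟨mem_univ i, by simpa using hi⟩)
  · calc #{i | x i} ≤ n := (card_filter_le _ _).trans_eq (card_fin n)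
      _ ≤ d ^ r := hnd
      _ < (d + 1) ^ Fintype.card (Fin r) := by
          rw [Fintype.card_fin]
          exact Nat.pow_lt_pow_left (Nat.lt_add_one d) (by omega)
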